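/- Let L : Y × U → ℝ and S : U → Y be twice continuously Fréchet differentiable maps between Banach spaces, and define J(x) = L(S(x), x). Suppose at x̄ ∈ U, with ȳ = S(x̄), we have L_y(ȳ, x̄) = 0. Then DJ(x̄) = L_x(ȳ, x̄), and D²J(x̄).(h,k) = D²L(ȳ, x̄).((DS(x̄)h, h), (DS(x̄)k, k)); in particular the term involving D²S(x̄) vanishes. -/

import Mathlib

/-!
Write `J = L ∘ G` with `G x = (S x, x)`. The second-order chain rule gives
`D²J = D²L(DG·, DG·) + DL(D²G(·,·))`, and since the second component of `G` is linear,
`D²G(h, k) = (D²S(h, k), 0)`. The correction term is therefore `L_y(ȳ, x̄)(D²S(x̄)(h, k))`,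
which vanishes by hypothesis.
-/

section SecondDerivative

variable {𝕜 : Type*} [NontriviallyNormedField 𝕜]
  {E F G : Type*} [NormedAddCommGroup E] [NormedSpace 𝕜 E] [NormedAddCommGroup F]
  [NormedSpace 𝕜 F] [NormedAddCommGroup G] [NormedSpace 𝕜 G]

theorem ContDiff.differentiable_fderiv_of_two_le {f : E → F} {n : WithTop ℕ∞}
    (hf : ContDiff 𝕜 n f) (hn : 2 ≤ n) : Differentiable 𝕜 (fderiv 𝕜 f) :=
  (hf.fderiv_right (m := 1) hn).differentiable one_ne_zero

theorem fderiv_fderiv_apply_eq_fderiv_apply {f : E → F} {x : E}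
    (hf : DifferentiableAt 𝕜 (fderiv 𝕜 f) x) (h k : E) :
    fderiv 𝕜 (fderiv 𝕜 f) x h k = fderiv 𝕜 (fun y => fderiv 𝕜 f y k) x h := by
  rw [fderiv_clm_apply hf (differentiableAt_const k)]
  simp

theorem fderiv_fderiv_comp_apply {f : F → G} {g : E → F} {x : E}
    (hf : Differentiable 𝕜 f) (hg : Differentiable 𝕜 g)
    (hf₂ : DifferentiableAt 𝕜 (fderiv 𝕜 f) (g x)) (hg₂ : DifferentiableAt 𝕜 (fderiv 𝕜 g) x)
    (h k : E) :
    fderiv 𝕜 (fderiv 𝕜 (f ∘ g)) x h k =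
      fderiv 𝕜 (fderiv 𝕜 f) (g x) (fderiv 𝕜 g x h) (fderiv 𝕜 g x k) +
        fderiv 𝕜 f (g x) (fderiv 𝕜 (fderiv 𝕜 g) x h k) := by
  have hD : fderiv 𝕜 (f ∘ g) = fun y => (fderiv 𝕜 f (g y)).comp (fderiv 𝕜 g y) :=
    funext fun y => fderiv_comp y (hf _) (hg y)
  have hD₂ : HasFDerivAt (fun y => (fderiv 𝕜 f (g y)).comp (fderiv 𝕜 g y)) _ x :=
    (hf₂.hasFDerivAt.comp x (hg x).hasFDerivAt).clm_comp hg₂.hasFDerivAt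
  rw [hD, hD₂.fderiv]
  simp [add_comm]

theorem fderiv_graph_apply {S : E → F} (hS : Differentiable 𝕜 S) (x k : E) :
    fderiv 𝕜 (fun y => (S y, y)) x k = (fderiv 𝕜 S x k, k) := by
  have hG : HasFDerivAt (fun y => (S y, y)) _ x := (hS x).hasFDerivAt.prodMk (hasFDerivAt_id x)
  simp [hG.fderiv]

theorem fderiv_fderiv_graph_apply {S : E → F} (hS : ContDiff 𝕜 2 S) (x h k : E) :
    fderiv 𝕜 (fderiv 𝕜 (fun y => (S y, y))) x h k = (fderiv 𝕜 (fderiv 𝕜 S) x h k, 0) := by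
  have hS₁ : Differentiable 𝕜 S := hS.differentiable two_ne_zero
  have hS₂ : Differentiable 𝕜 (fderiv 𝕜 S) := hS.differentiable_fderiv_of_two_le le_rfl
  have hG₂ : Differentiable 𝕜 (fderiv 𝕜 fun y => (S y, y)) :=
    (hS.prodMk contDiff_id).differentiable_fderiv_of_two_le le_rfl
  rw [fderiv_fderiv_apply_eq_fderiv_apply (hG₂ x)]
  simp only [fderiv_graph_apply hS₁]
  rw [DifferentiableAt.fderiv_prodMk ((hS₂ x).clm_apply (differentiableAt_const k))
    (differentiableAt_const k), fderiv_fderiv_apply_eq_fderiv_apply (hS₂ x)]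
  simp

end SecondDerivative

/-- Abstract Lagrangian reduction (used in Propositions 3.5 and 3.6): if
`J(x) = L(S(x), x)` and the partial derivative `L_y(S(x̄), x̄)` vanishes, then the first
derivative of `J` at `x̄` is `L_x(ȳ, x̄)` and the second derivative is
`D²L(ȳ,x̄).((DS(x̄)h, h),(DS(x̄)k, k))`; the term involving `D²S(x̄)` vanishes. -/
theorem stmt_16 {Y U : Type*} [NormedAddCommGroup Y] [NormedSpace ℝ Y]
    [NormedAddCommGroup U] [NormedSpace ℝ U]
    (L : Y × U → ℝ) (hL : ContDiff ℝ 2 L)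
    (S : U → Y) (hS : ContDiff ℝ 2 S)
    (J : U → ℝ) (hJ : ∀ x, J x = L (S x, x))
    (xbar : U)
    (hLy : ∀ v : Y, fderiv ℝ L (S xbar, xbar) (v, 0) = 0) :
    (∀ h : U, fderiv ℝ J xbar h = fderiv ℝ L (S xbar, xbar) (0, h)) ∧
    (∀ h k : U, fderiv ℝ (fderiv ℝ J) xbar h k
        = fderiv ℝ (fderiv ℝ L) (S xbar, xbar)
            (fderiv ℝ S xbar h, h) (fderiv ℝ S xbar k, k)) := by
  have hS₁ : Differentiable ℝ S := hS.differentiable two_ne_zero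
  have hG : ContDiff ℝ 2 fun x => (S x, x) := hS.prodMk contDiff_id
  obtain rfl : J = L ∘ fun x => (S x, x) := funext hJ
  constructor
  · intro h
    have hsplit : (fderiv ℝ S xbar h, h) = ((fderiv ℝ S xbar h, 0) : Y × U) + (0, h) := by simp
    rw [fderiv_comp xbar (hL.differentiable two_ne_zero _) (hG.differentiable two_ne_zero _),
      ContinuousLinearMap.coe_comp, Function.comp_apply, fderiv_graph_apply hS₁, hsplit, map_add, hLy, zero_add]
  · intro h k
    rw [fderiv_fderiv_comp_apply (hL.differentiable two_ne_zero) (hG.differentiable two_ne_zero)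
      (hL.differentiable_fderiv_of_two_le le_rfl _) (hG.differentiable_fderiv_of_two_le le_rfl _),
      fderiv_fderiv_graph_apply hS, hLy, add_zero, fderiv_graph_apply hS₁, fderiv_graph_apply hS₁]
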